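/- For every ε > 0 there exists a constant C_ε > 0, depending only on ε and η, such that for all x, y > 0 and all t ≥ 0, E[ |X^x_t − X^y_t| ] ≤ C_ε |x − y| + ε ( x + y + t^η ). (One may take C_ε = 2^{η²} ((η−1)/ε)^{η−1}.) -/

import Mathlib

/-!
For `y ≤ x` write `X^x_t - X^y_t = G_t^(-η) (A^η - B^η)` with `A = x^(1-α) + I_t`,
`B = y^(1-α) + I_t` and `I_t = (1-α) ∫_0^t G_s ds`. Convexity gives
`A^η - B^η ≤ η A^(η-1) (A - B)`, subadditivity of `z ↦ z^(1-α)` gives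
`A - B ≤ (x - y)^(1-α)`, and Young's inequality splits `η A^(η-1) (x - y)^(1-α)` into
`ε' A^η + C (x - y)`. Hence `X^x_t - X^y_t ≤ ε' X^x_t + C (x - y) G_t^(-η)` pathwise.

Both terms on the right are controlled in mean by `E[(G_s / G_t)^η] ≤ 1` for `s ≤ t`: since
`c ≥ 0`, pathwise `(G_s / G_t)^η ≤ exp (-(μ + σ²/2)(t - s) - σ (W_t - W_s))`, and the Gaussian
moment generating function turns this into `exp (-μ (t - s)) ≤ 1`. With `s = 0` this bounds
`E[G_t^(-η)]`, and with Jensen's inequality in `s` it bounds `E[(I_t / G_t)^η] ≤ t^η`, so that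
`E[X^x_t] ≤ 2^(η-1) (x + t^η)`.
-/

open MeasureTheory Real Set Filter
open scoped ENNReal

namespace Real

lemma rpow_sub_rpow_le_mul_rpow_sub_one_mul {p a b : ℝ} (hp : 1 ≤ p) (hb : 0 ≤ b)
    (hba : b ≤ a) : a ^ p - b ^ p ≤ p * a ^ (p - 1) * (a - b) := by
  obtain rfl | ha := (hb.trans hba).eq_or_lt
  · simp [le_antisymm hba hb]
  -- Bernoulli's inequality for `b / a = 1 + (b / a - 1)`
  have hbern := one_add_mul_self_le_rpow_one_add (s := b / a - 1)
    (by linarith [div_nonneg hb ha.le]) hp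
  rw [add_sub_cancel, div_rpow hb ha.le, le_div_iff₀ (rpow_pos_of_pos ha p)] at hbern
  have hap : a ^ p = a ^ (p - 1) * a := by rw [← rpow_add_one ha.ne', sub_add_cancel]
  have hexp : (1 + p * (b / a - 1)) * a ^ p = a ^ p - p * a ^ (p - 1) * (a - b) := by
    rw [hap]; field_simp; ring
  linarith

lemma rpow_sub_rpow_le_rpow_sub {q x y : ℝ} (hq0 : 0 ≤ q) (hq1 : q ≤ 1) (hy : 0 ≤ y)
    (hyx : y ≤ x) : x ^ q - y ^ q ≤ (x - y) ^ q := by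
  have := rpow_add_le_add_rpow hy (sub_nonneg.2 hyx) hq0 hq1
  rw [add_sub_cancel] at this
  linarith

lemma add_rpow_le_two_rpow_mul {p a b : ℝ} (hp : 1 ≤ p) (ha : 0 ≤ a) (hb : 0 ≤ b) :
    (a + b) ^ p ≤ 2 ^ (p - 1) * (a ^ p + b ^ p) := by
  lift a to NNReal using ha
  lift b to NNReal using hb
  exact_mod_cast NNReal.rpow_add_le_mul_rpow_add_rpow a b hp

/-- Young's inequality for the conjugate exponents `p / (p - 1)` and `p`, applied to
`l * u ^ (p - 1)` and `v / l` with `l = (e / (p - 1)) ^ ((p - 1) / p)`. -/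
lemma mul_rpow_sub_one_mul_le {p e u v : ℝ} (hp : 1 < p) (he : 0 < e) (hu : 0 ≤ u)
    (hv : 0 ≤ v) :
    p * u ^ (p - 1) * v ≤ e * u ^ p + ((p - 1) / e) ^ (p - 1) * v ^ p := by
  have hp1 : 0 < p - 1 := by linarith
  have hconj : (p / (p - 1)).HolderConjugate p := (HolderConjugate.conjExponent hp).symm
  set k := e / (p - 1)
  have hk : 0 < k := div_pos he hp1
  set l := k ^ ((p - 1) / p)
  have hl : 0 < l := rpow_pos_of_pos hk _
  have hlr : l ^ (p / (p - 1)) = k := by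
    rw [← rpow_mul hk.le, show (p - 1) / p * (p / (p - 1)) = 1 by field_simp, rpow_one]
  have hlp : l ^ p = k ^ (p - 1) := by
    rw [← rpow_mul hk.le, show (p - 1) / p * p = p - 1 by field_simp]
  have hur : (u ^ (p - 1)) ^ (p / (p - 1)) = u ^ p := by
    rw [← rpow_mul hu, show (p - 1) * (p / (p - 1)) = p by field_simp]
  have hyoung := young_inequality_of_nonneg (mul_nonneg hl.le (rpow_nonneg hu (p - 1)))
    (div_nonneg hv hl.le) hconj
  rw [mul_rpow hl.le (rpow_nonneg hu _), hlr, hur, div_rpow hv hl.le, hlp] at hyoung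
  have hK : ((p - 1) / e) ^ (p - 1) = 1 / k ^ (p - 1) := by
    rw [← one_div_div e, div_rpow zero_le_one hk.le, one_rpow]
  rw [hK]
  calc p * u ^ (p - 1) * v = p * (l * u ^ (p - 1) * (v / l)) := by field_simp
    _ ≤ p * (k * u ^ p / (p / (p - 1)) + v ^ p / k ^ (p - 1) / p) := by gcongr
    _ = e * u ^ p + 1 / k ^ (p - 1) * v ^ p := by
      simp only [k]; field_simp

lemma rpow_add_sub_rpow_add_le {p q e x y I : ℝ} (hp : 1 < p) (hqp : q * p = 1) (he : 0 < e)
    (hI : 0 ≤ I) (hy : 0 ≤ y) (hyx : y ≤ x) :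
    (x ^ q + I) ^ p - (y ^ q + I) ^ p ≤
      e * (x ^ q + I) ^ p + ((p - 1) / e) ^ (p - 1) * (x - y) := by
  have hq0 : 0 ≤ q := by nlinarith
  have hq1 : q ≤ 1 := by nlinarith
  have hx : 0 ≤ x := hy.trans hyx
  have hxy : 0 ≤ x - y := sub_nonneg.2 hyx
  have hmono : y ^ q + I ≤ x ^ q + I := by gcongr
  have hsub : x ^ q + I - (y ^ q + I) ≤ (x - y) ^ q := by
    rw [add_sub_add_right_eq_sub]; exact rpow_sub_rpow_le_rpow_sub hq0 hq1 hy hyx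
  have hyoung := mul_rpow_sub_one_mul_le hp he (by positivity : 0 ≤ x ^ q + I)
    (rpow_nonneg hxy q)
  rw [← rpow_mul hxy, hqp, rpow_one] at hyoung
  calc (x ^ q + I) ^ p - (y ^ q + I) ^ p
      ≤ p * (x ^ q + I) ^ (p - 1) * (x ^ q + I - (y ^ q + I)) :=
        rpow_sub_rpow_le_mul_rpow_sub_one_mul hp.le (by positivity) hmono
    _ ≤ p * (x ^ q + I) ^ (p - 1) * (x - y) ^ q := by gcongr
    _ ≤ e * (x ^ q + I) ^ p + ((p - 1) / e) ^ (p - 1) * (x - y) := hyoung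

end Real

lemma ENNReal.rpow_lintegral_le_measure_univ_rpow_mul {α : Type*} [MeasurableSpace α]
    (μ : Measure α) {p : ℝ} (hp : 1 < p) {f : α → ℝ≥0∞} (hf : AEMeasurable f μ) :
    (∫⁻ a, f a ∂μ) ^ p ≤ μ univ ^ (p - 1) * ∫⁻ a, f a ^ p ∂μ := by
  have hp0 : 0 ≤ p := by linarith
  have hHolder := ENNReal.lintegral_mul_le_Lp_mul_Lq μ (Real.HolderConjugate.conjExponent hp)
    hf aemeasurable_const (g := fun _ => 1)
  simp only [Pi.mul_apply, mul_one, ENNReal.one_rpow, lintegral_one] at hHolder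
  calc (∫⁻ a, f a ∂μ) ^ p
      ≤ ((∫⁻ a, f a ^ p ∂μ) ^ (1 / p) * μ univ ^ (1 / p.conjExponent)) ^ p :=
        ENNReal.rpow_le_rpow hHolder hp0
    _ = μ univ ^ (p - 1) * ∫⁻ a, f a ^ p ∂μ := by
        rw [ENNReal.mul_rpow_of_nonneg _ _ hp0, ← ENNReal.rpow_mul, ← ENNReal.rpow_mul,
          Real.conjExponent, one_div_div, show 1 / p * p = 1 by field_simp,
          show (p - 1) / p * p = p - 1 by field_simp, ENNReal.rpow_one, mul_comm]

namespace ProbabilityTheory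

lemma lintegral_ofReal_exp_mul_of_map_eq_gaussianReal {Ω : Type*} [MeasurableSpace Ω]
    {P : Measure Ω} {Y : Ω → ℝ} {v : NNReal} (hlaw : P.map Y = gaussianReal 0 v) (l : ℝ) :
    ∫⁻ ω, ENNReal.ofReal (exp (l * Y ω)) ∂P = ENNReal.ofReal (exp (v * l ^ 2 / 2)) := by
  have hY : AEMeasurable Y P := aemeasurable_of_map_neZero (by rw [hlaw]; infer_instance)
  rw [← lintegral_map' (f := fun u => ENNReal.ofReal (exp (l * u))) (by fun_prop) hY, hlaw,
    ← ofReal_integral_eq_lintegral_ofReal (integrable_exp_mul_gaussianReal l)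
      (ae_of_all _ fun _ => (exp_pos _).le)]
  have := congrFun (mgf_fun_id_gaussianReal (μ := 0) (v := v)) l
  simp only [mgf, zero_mul, zero_add] at this
  rw [this]

end ProbabilityTheory

lemma mul_sub_le_setIntegral_Ioc_sub {f : ℝ → ℝ} {m a s t : ℝ} (hf : IntegrableOn f (Ioc a t))
    (hm : ∀ u, m ≤ f u) (has : a ≤ s) (hst : s ≤ t) :
    m * (t - s) ≤ (∫ u in Ioc a t, f u) - ∫ u in Ioc a s, f u := by
  have hat : IntervalIntegrable f volume a t :=
    (intervalIntegrable_iff_integrableOn_Ioc_of_le (has.trans hst)).2 hf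
  have has' : IntervalIntegrable f volume a s :=
    (intervalIntegrable_iff_integrableOn_Ioc_of_le has).2
      (hf.mono_set (Ioc_subset_Ioc_right hst))
  rw [← intervalIntegral.integral_of_le (has.trans hst), ← intervalIntegral.integral_of_le has,
    intervalIntegral.integral_interval_sub_left hat has']
  calc m * (t - s) = ∫ _ in s..t, m := by simp [mul_comm]
    _ ≤ ∫ u in s..t, f u := intervalIntegral.integral_mono_on hst intervalIntegrable_const
        (has'.symm.trans hat) fun u _ => hm u

lemma Measurable.setIntegral_Ioc_uncurry {Ω : Type*} [MeasurableSpace Ω] {f : ℝ → Ω → ℝ}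
    (hf : Measurable (Function.uncurry f)) (a : ℝ) :
    Measurable fun q : ℝ × Ω => ∫ s in Ioc a q.1, f s q.2 := by
  have hind :
      Measurable fun p : (ℝ × Ω) × ℝ => (Ioc a p.1.1).indicator (fun s => f s p.1.2) p.2 :=
    Measurable.indicator (s := {p : (ℝ × Ω) × ℝ | p.2 ∈ Ioc a p.1.1})
      (f := fun p => f p.2 p.1.2)
      (hf.comp (measurable_snd.prodMk (measurable_snd.comp measurable_fst)))
      ((measurableSet_lt measurable_const measurable_snd).inter
        (measurableSet_le measurable_snd (measurable_fst.comp measurable_fst)))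
  simp_rw [← integral_indicator measurableSet_Ioc]
  exact (hind.stronglyMeasurable.integral_prod_right (ν := volume)).measurable

structure HasRatioMomentBound {Ω : Type*} [MeasurableSpace Ω] (P : Measure Ω) (η : ℝ)
    (G : ℝ → Ω → ℝ) : Prop where
  pos : ∀ t ω, 0 < G t ω
  measurable : Measurable (Function.uncurry G)
  ae_eq_one_at_zero : ∀ᵐ ω ∂P, G 0 ω = 1
  lintegral_rpow_div_le_one :
    ∀ s t, 0 ≤ s → s ≤ t → ∫⁻ ω, ENNReal.ofReal (G s ω / G t ω) ^ η ∂P ≤ 1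

noncomputable def capitalPerCapita {Ω : Type*} (G : ℝ → Ω → ℝ) (q η x t : ℝ) (ω : Ω) : ℝ :=
  G t ω ^ (-η) * (x ^ q + q * ∫ s in Ioc 0 t, G s ω) ^ η

section capitalPerCapita

variable {Ω : Type*} {G : ℝ → Ω → ℝ} {q η x y t : ℝ} {ω : Ω}

lemma capitalPerCapita_le (hpos : ∀ s, 0 < G s ω) (hη : 1 ≤ η) (hqη : q * η = 1)
    (hx : 0 ≤ x) :
    capitalPerCapita G q η x t ω ≤
      2 ^ (η - 1) * (x * G t ω ^ (-η) + ((q * ∫ s in Ioc 0 t, G s ω) / G t ω) ^ η) := by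
  have hq : 0 ≤ q := by nlinarith
  have hI : 0 ≤ q * ∫ s in Ioc 0 t, G s ω :=
    mul_nonneg hq (integral_nonneg fun s => (hpos s).le)
  have hsplit := Real.add_rpow_le_two_rpow_mul hη (rpow_nonneg hx q) hI
  rw [← rpow_mul hx, hqη, rpow_one] at hsplit
  have hGt := hpos t
  calc capitalPerCapita G q η x t ω
      ≤ G t ω ^ (-η) * (2 ^ (η - 1) * (x + (q * ∫ s in Ioc 0 t, G s ω) ^ η)) := by
        unfold capitalPerCapita; gcongr
    _ = 2 ^ (η - 1) * (x * G t ω ^ (-η) + ((q * ∫ s in Ioc 0 t, G s ω) / G t ω) ^ η) := by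
        rw [div_rpow hI hGt.le, rpow_neg hGt.le]; ring

lemma capitalPerCapita_sub_le {e : ℝ} (hpos : ∀ s, 0 < G s ω) (hη : 1 < η) (hqη : q * η = 1)
    (he : 0 < e) (hy : 0 ≤ y) (hyx : y ≤ x) :
    capitalPerCapita G q η x t ω - capitalPerCapita G q η y t ω ≤
      e * capitalPerCapita G q η x t ω + ((η - 1) / e) ^ (η - 1) * (x - y) * G t ω ^ (-η) := by
  have hI : 0 ≤ q * ∫ s in Ioc 0 t, G s ω :=
    mul_nonneg (by nlinarith) (integral_nonneg fun s => (hpos s).le)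
  have hdiff := Real.rpow_add_sub_rpow_add_le hη hqη he hI hy hyx
  have hGt : 0 ≤ G t ω ^ (-η) := rpow_nonneg (hpos t).le _
  unfold capitalPerCapita
  nlinarith [mul_le_mul_of_nonneg_left hdiff hGt]

lemma capitalPerCapita_le_of_le (hpos : ∀ s, 0 < G s ω) (hη : 0 ≤ η) (hq : 0 ≤ q)
    (hy : 0 ≤ y) (hyx : y ≤ x) : capitalPerCapita G q η y t ω ≤ capitalPerCapita G q η x t ω := by
  have hI : 0 ≤ q * ∫ s in Ioc 0 t, G s ω :=
    mul_nonneg hq (integral_nonneg fun s => (hpos s).le)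
  have hGt : 0 ≤ G t ω ^ (-η) := rpow_nonneg (hpos t).le _
  unfold capitalPerCapita
  gcongr

end capitalPerCapita

namespace HasRatioMomentBound

variable {Ω : Type*} [MeasurableSpace Ω] {P : Measure Ω} {η : ℝ} {G : ℝ → Ω → ℝ}

lemma lintegral_rpow_neg_le_one (hG : HasRatioMomentBound P η G) (hη : 0 ≤ η) {t : ℝ}
    (ht : 0 ≤ t) : ∫⁻ ω, ENNReal.ofReal (G t ω ^ (-η)) ∂P ≤ 1 := by
  calc ∫⁻ ω, ENNReal.ofReal (G t ω ^ (-η)) ∂P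
      = ∫⁻ ω, ENNReal.ofReal (G 0 ω / G t ω) ^ η ∂P := by
        refine lintegral_congr_ae ?_
        filter_upwards [hG.ae_eq_one_at_zero] with ω h0
        have hGt := hG.pos t ω
        rw [h0, ENNReal.ofReal_rpow_of_nonneg (by positivity) hη, one_div, inv_rpow hGt.le,
          rpow_neg hGt.le]
    _ ≤ 1 := hG.lintegral_rpow_div_le_one 0 t le_rfl ht

lemma lintegral_rpow_integral_div_le [SFinite P] (hG : HasRatioMomentBound P η G) (hη : 1 < η)
    {q t : ℝ} (hq1 : q ≤ 1) :
    ∫⁻ ω, ENNReal.ofReal ((q * ∫ s in Ioc 0 t, G s ω) / G t ω) ^ η ∂P ≤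
      ENNReal.ofReal t ^ η := by
  have hη0 : 0 ≤ η := by linarith
  have hpath : ∀ ω, ENNReal.ofReal ((q * ∫ s in Ioc 0 t, G s ω) / G t ω) ^ η ≤
      ENNReal.ofReal t ^ (η - 1) * ∫⁻ s in Ioc 0 t, ENNReal.ofReal (G s ω / G t ω) ^ η := by
    intro ω
    have hratio : ∀ s, 0 ≤ G s ω / G t ω := fun s =>
      div_nonneg (hG.pos s ω).le (hG.pos t ω).le
    have hle : (q * ∫ s in Ioc 0 t, G s ω) / G t ω ≤ ∫ s in Ioc 0 t, G s ω / G t ω := by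
      rw [integral_div, mul_div_assoc]
      exact mul_le_of_le_one_left (div_nonneg (integral_nonneg fun s => (hG.pos s ω).le)
        (hG.pos t ω).le) hq1
    have hofReal : ENNReal.ofReal (∫ s in Ioc 0 t, G s ω / G t ω) ≤
        ∫⁻ s in Ioc 0 t, ENNReal.ofReal (G s ω / G t ω) := by
      rw [← Real.enorm_of_nonneg (integral_nonneg hratio)]
      refine (enorm_integral_le_lintegral_enorm _).trans_eq (lintegral_congr fun s => ?_)
      exact Real.enorm_of_nonneg (hratio s)
    have hJensen := ENNReal.rpow_lintegral_le_measure_univ_rpow_mul (volume.restrict (Ioc 0 t))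
      hη (f := fun s => ENNReal.ofReal (G s ω / G t ω))
      (((hG.measurable.comp measurable_prodMk_right).div_const _).ennreal_ofReal.aemeasurable)
    rw [Measure.restrict_apply_univ, Real.volume_Ioc, sub_zero] at hJensen
    exact (ENNReal.rpow_le_rpow ((ENNReal.ofReal_le_ofReal hle).trans hofReal) hη0).trans hJensen
  have hjoint : Measurable fun p : Ω × ℝ => ENNReal.ofReal (G p.2 p.1 / G t p.1) ^ η := by
    have hGs : Measurable fun p : Ω × ℝ => G p.2 p.1 := hG.measurable.comp measurable_swap
    have hGt : Measurable fun p : Ω × ℝ => G t p.1 :=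
      hG.measurable.comp (measurable_const.prodMk measurable_fst)
    exact (hGs.div hGt).ennreal_ofReal.pow_const η
  calc ∫⁻ ω, ENNReal.ofReal ((q * ∫ s in Ioc 0 t, G s ω) / G t ω) ^ η ∂P
      ≤ ∫⁻ ω, ENNReal.ofReal t ^ (η - 1) *
          (∫⁻ s in Ioc 0 t, ENNReal.ofReal (G s ω / G t ω) ^ η) ∂P := lintegral_mono hpath
    _ = ENNReal.ofReal t ^ (η - 1) *
          ∫⁻ s in Ioc 0 t, (∫⁻ ω, ENNReal.ofReal (G s ω / G t ω) ^ η ∂P) := by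
        rw [lintegral_const_mul' _ _ (by finiteness), lintegral_lintegral_swap hjoint.aemeasurable]
    _ ≤ ENNReal.ofReal t ^ (η - 1) * ∫⁻ s in Ioc 0 t, 1 := by
        gcongr 1
        exact setLIntegral_mono measurable_const fun s hs =>
          hG.lintegral_rpow_div_le_one s t hs.1.le hs.2
    _ = ENNReal.ofReal t ^ η := by
        rw [setLIntegral_one, Real.volume_Ioc, sub_zero]
        conv_rhs => rw [← sub_add_cancel η 1,
          ENNReal.rpow_add_of_nonneg _ _ (sub_nonneg.2 hη.le) zero_le_one, ENNReal.rpow_one]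

lemma measurable_apply (hG : HasRatioMomentBound P η G) (t : ℝ) : Measurable (G t) :=
  hG.measurable.comp (measurable_const.prodMk measurable_id)

lemma lintegral_capitalPerCapita_le [SFinite P] (hG : HasRatioMomentBound P η G) (hη : 1 < η)
    {q x t : ℝ} (hqη : q * η = 1) (hx : 0 ≤ x) (ht : 0 ≤ t) :
    ∫⁻ ω, ENNReal.ofReal (capitalPerCapita G q η x t ω) ∂P ≤
      ENNReal.ofReal (2 ^ (η - 1)) * (ENNReal.ofReal x + ENNReal.ofReal t ^ η) := by
  have hη0 : 0 ≤ η := by linarith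
  have hq0 : 0 ≤ q := by nlinarith
  have hq1 : q ≤ 1 := by nlinarith
  calc ∫⁻ ω, ENNReal.ofReal (capitalPerCapita G q η x t ω) ∂P
      ≤ ∫⁻ ω, ENNReal.ofReal (2 ^ (η - 1)) *
          (ENNReal.ofReal x * ENNReal.ofReal (G t ω ^ (-η)) +
            ENNReal.ofReal ((q * ∫ s in Ioc 0 t, G s ω) / G t ω) ^ η) ∂P := by
        refine lintegral_mono fun ω => ?_
        have hGt := hG.pos t ω
        have hGn : 0 ≤ G t ω ^ (-η) := rpow_nonneg hGt.le _
        have hratio : 0 ≤ (q * ∫ s in Ioc 0 t, G s ω) / G t ω :=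
          div_nonneg (mul_nonneg hq0 (integral_nonneg fun s => (hG.pos s ω).le)) hGt.le
        rw [ENNReal.ofReal_rpow_of_nonneg hratio hη0, ← ENNReal.ofReal_mul hx,
          ← ENNReal.ofReal_add (by positivity) (by positivity),
          ← ENNReal.ofReal_mul (by positivity)]
        exact ENNReal.ofReal_le_ofReal (capitalPerCapita_le (hG.pos · ω) hη.le hqη hx)
    _ = ENNReal.ofReal (2 ^ (η - 1)) *
          (ENNReal.ofReal x * ∫⁻ ω, ENNReal.ofReal (G t ω ^ (-η)) ∂P +
            ∫⁻ ω, ENNReal.ofReal ((q * ∫ s in Ioc 0 t, G s ω) / G t ω) ^ η ∂P) := by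
        rw [lintegral_const_mul' _ _ ENNReal.ofReal_ne_top, lintegral_add_left' (by
          exact ((hG.measurable_apply t).pow_const _).ennreal_ofReal.const_mul _ |>.aemeasurable),
          lintegral_const_mul' _ _ ENNReal.ofReal_ne_top]
    _ ≤ ENNReal.ofReal (2 ^ (η - 1)) * (ENNReal.ofReal x * 1 + ENNReal.ofReal t ^ η) := by
        gcongr
        · exact hG.lintegral_rpow_neg_le_one hη0 ht
        · exact hG.lintegral_rpow_integral_div_le hη hq1
    _ = ENNReal.ofReal (2 ^ (η - 1)) * (ENNReal.ofReal x + ENNReal.ofReal t ^ η) := by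
        rw [mul_one]

lemma lintegral_capitalPerCapita_sub_le [SFinite P] (hG : HasRatioMomentBound P η G)
    (hη : 1 < η) {q e x y t : ℝ} (hqη : q * η = 1) (he : 0 < e) (hy : 0 ≤ y) (hyx : y ≤ x)
    (ht : 0 ≤ t) :
    ∫⁻ ω, ENNReal.ofReal (capitalPerCapita G q η x t ω - capitalPerCapita G q η y t ω) ∂P ≤
      ENNReal.ofReal (e * 2 ^ (η - 1) * (x + t ^ η) + ((η - 1) / e) ^ (η - 1) * (x - y)) := by
  have hη0 : 0 ≤ η := by linarith
  have hx : 0 ≤ x := hy.trans hyx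
  set C := ((η - 1) / e) ^ (η - 1)
  have hC : 0 ≤ C * (x - y) :=
    mul_nonneg (rpow_nonneg (div_nonneg (by linarith) he.le) _) (sub_nonneg.2 hyx)
  calc ∫⁻ ω, ENNReal.ofReal (capitalPerCapita G q η x t ω - capitalPerCapita G q η y t ω) ∂P
      ≤ ∫⁻ ω, ENNReal.ofReal e * ENNReal.ofReal (capitalPerCapita G q η x t ω) +
          ENNReal.ofReal (C * (x - y)) * ENNReal.ofReal (G t ω ^ (-η)) ∂P := by
        refine lintegral_mono fun ω => ?_
        rw [← ENNReal.ofReal_mul he.le, ← ENNReal.ofReal_mul hC]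
        exact (ENNReal.ofReal_le_ofReal
          (capitalPerCapita_sub_le (hG.pos · ω) hη hqη he hy hyx)).trans ENNReal.ofReal_add_le
    _ = ENNReal.ofReal e * ∫⁻ ω, ENNReal.ofReal (capitalPerCapita G q η x t ω) ∂P +
          ENNReal.ofReal (C * (x - y)) * ∫⁻ ω, ENNReal.ofReal (G t ω ^ (-η)) ∂P := by
        rw [lintegral_add_right' _
            (((hG.measurable_apply t).pow_const _).ennreal_ofReal.const_mul _).aemeasurable,
          lintegral_const_mul' _ _ ENNReal.ofReal_ne_top,
          lintegral_const_mul' _ _ ENNReal.ofReal_ne_top]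
    _ ≤ ENNReal.ofReal e *
          (ENNReal.ofReal (2 ^ (η - 1)) * (ENNReal.ofReal x + ENNReal.ofReal t ^ η)) +
          ENNReal.ofReal (C * (x - y)) * 1 := by
        gcongr
        · exact hG.lintegral_capitalPerCapita_le hη hqη hx ht
        · exact hG.lintegral_rpow_neg_le_one hη0 ht
    _ = ENNReal.ofReal (e * 2 ^ (η - 1) * (x + t ^ η) + C * (x - y)) := by
        rw [mul_one, ENNReal.ofReal_rpow_of_nonneg ht hη0,
          ← ENNReal.ofReal_add hx (by positivity),
          ← ENNReal.ofReal_mul (by positivity), ← ENNReal.ofReal_mul he.le,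
          ← ENNReal.ofReal_add (by positivity) hC, mul_assoc]

lemma lintegral_abs_capitalPerCapita_sub_le [SFinite P] (hG : HasRatioMomentBound P η G)
    (hη : 1 < η) {q ε x y t : ℝ} (hqη : q * η = 1) (hε : 0 < ε) (hx : 0 ≤ x) (hy : 0 ≤ y)
    (ht : 0 ≤ t) :
    ∫⁻ ω, ENNReal.ofReal |capitalPerCapita G q η x t ω - capitalPerCapita G q η y t ω| ∂P ≤
      ENNReal.ofReal (2 ^ (η ^ 2) * ((η - 1) / ε) ^ (η - 1) * |x - y| + ε * (x + y + t ^ η)) := by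
  wlog hyx : y ≤ x generalizing x y
  · simp_rw [abs_sub_comm (capitalPerCapita G q η x t _), abs_sub_comm x, add_comm x y]
    exact this hy hx (le_of_not_ge hyx)
  have hη0 : 0 ≤ η := by linarith
  have hq : 0 ≤ q := by nlinarith
  have h2 : (0 : ℝ) < 2 ^ (η - 1) := by positivity
  -- Run the estimate with `e = ε / 2 ^ (η - 1)`; this costs the factor `2 ^ ((η - 1) ^ 2)`.
  have hconst :
      ((η - 1) / (ε / 2 ^ (η - 1))) ^ (η - 1) ≤ 2 ^ (η ^ 2) * ((η - 1) / ε) ^ (η - 1) := by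
    rw [div_div_eq_mul_div, mul_div_right_comm, mul_rpow (div_nonneg (by linarith) hε.le) h2.le,
      ← rpow_mul zero_le_two, mul_comm]
    gcongr
    · norm_num
    · nlinarith
  calc ∫⁻ ω, ENNReal.ofReal |capitalPerCapita G q η x t ω - capitalPerCapita G q η y t ω| ∂P
      = ∫⁻ ω, ENNReal.ofReal (capitalPerCapita G q η x t ω - capitalPerCapita G q η y t ω) ∂P :=
        lintegral_congr fun ω => by
          rw [abs_of_nonneg (sub_nonneg.2 (capitalPerCapita_le_of_le (hG.pos · ω) hη0 hq hy hyx))]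
    _ ≤ ENNReal.ofReal (ε / 2 ^ (η - 1) * 2 ^ (η - 1) * (x + t ^ η) +
          ((η - 1) / (ε / 2 ^ (η - 1))) ^ (η - 1) * (x - y)) :=
        hG.lintegral_capitalPerCapita_sub_le hη hqη (div_pos hε h2) hy hyx ht
    _ ≤ ENNReal.ofReal
          (2 ^ (η ^ 2) * ((η - 1) / ε) ^ (η - 1) * |x - y| + ε * (x + y + t ^ η)) := by
        rw [div_mul_cancel₀ _ h2.ne', abs_of_nonneg (sub_nonneg.2 hyx)]
        refine ENNReal.ofReal_le_ofReal ?_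
        nlinarith [mul_le_mul_of_nonneg_right hconst (sub_nonneg.2 hyx)]

end HasRatioMomentBound

noncomputable def growthFactor {Ω : Type*} (α μ σ : ℝ) (c W : ℝ → Ω → ℝ) (t : ℝ) (ω : Ω) :
    ℝ :=
  exp ((∫ s in Ioc 0 t, (1 - α) * (μ + c s ω + σ ^ 2 / 2)) + (1 - α) * σ * W t ω)

section growthFactor

variable {Ω : Type*} {α μ σ η : ℝ} {c W : ℝ → Ω → ℝ}

lemma growthFactor_div_rpow_le {s t : ℝ} {ω : Ω} (hα : α < 1) (hαη : (1 - α) * η = 1)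
    (hc : ∀ u, 0 ≤ c u ω) (hci : IntegrableOn (c · ω) (Ioc 0 t)) (hs : 0 ≤ s) (hst : s ≤ t) :
    (growthFactor α μ σ c W s ω / growthFactor α μ σ c W t ω) ^ η ≤
      exp (-(μ + σ ^ 2 / 2) * (t - s) - σ * (W t ω - W s ω)) := by
  have hα' : 0 < 1 - α := by linarith
  have hη : 0 < η := by nlinarith
  have hfi : IntegrableOn (fun r => (1 - α) * (μ + c r ω + σ ^ 2 / 2)) (Ioc 0 t) :=
    IntegrableOn.congr_fun
      ((hci.add (integrableOn_const (C := μ + σ ^ 2 / 2) (by simp))).const_mul (1 - α))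
      (fun r _ => by simp only [Pi.add_apply]; ring) measurableSet_Ioc
  have hdrift := mul_sub_le_setIntegral_Ioc_sub (m := (1 - α) * (μ + σ ^ 2 / 2)) hfi
    (fun u => by nlinarith [hc u]) hs hst
  rw [growthFactor, growthFactor, ← exp_sub, ← exp_mul, exp_le_exp]
  linear_combination η * hdrift - ((μ + σ ^ 2 / 2) * (t - s) + σ * (W t ω - W s ω)) * hαη

variable [MeasurableSpace Ω] {P : Measure Ω}

lemma lintegral_growthFactor_div_rpow_le_one {s t : ℝ} (hα : α < 1) (hμ : 0 ≤ μ)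
    (hαη : (1 - α) * η = 1)
    (hW : P.map (fun ω => W t ω - W s ω) = ProbabilityTheory.gaussianReal 0 (t - s).toNNReal)
    (hc : ∀ u ω, 0 ≤ c u ω) (hci : ∀ᵐ ω ∂P, IntegrableOn (c · ω) (Ioc 0 t))
    (hs : 0 ≤ s) (hst : s ≤ t) :
    ∫⁻ ω, ENNReal.ofReal (growthFactor α μ σ c W s ω / growthFactor α μ σ c W t ω) ^ η ∂P ≤
      1 := by
  have hη : 0 ≤ η := by nlinarith
  calc ∫⁻ ω, ENNReal.ofReal (growthFactor α μ σ c W s ω / growthFactor α μ σ c W t ω) ^ η ∂P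
      ≤ ∫⁻ ω, ENNReal.ofReal (exp (-(μ + σ ^ 2 / 2) * (t - s))) *
          ENNReal.ofReal (exp (-σ * (W t ω - W s ω))) ∂P := by
        refine lintegral_mono_ae ?_
        filter_upwards [hci] with ω hω
        rw [ENNReal.ofReal_rpow_of_nonneg (by unfold growthFactor; positivity) hη,
          ← ENNReal.ofReal_mul (exp_pos _).le, ← exp_add]
        refine ENNReal.ofReal_le_ofReal
          ((growthFactor_div_rpow_le hα hαη (hc · ω) hω hs hst).trans_eq ?_)
        ring_nf
    _ = ENNReal.ofReal (exp (-(μ + σ ^ 2 / 2) * (t - s))) *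
          ENNReal.ofReal (exp ((t - s) * σ ^ 2 / 2)) := by
        rw [lintegral_const_mul' _ _ ENNReal.ofReal_ne_top,
          ProbabilityTheory.lintegral_ofReal_exp_mul_of_map_eq_gaussianReal hW,
          Real.coe_toNNReal _ (sub_nonneg.2 hst), neg_sq]
    _ ≤ 1 := by
        rw [← ENNReal.ofReal_mul (exp_pos _).le, ← exp_add, ENNReal.ofReal_le_one, exp_le_one_iff]
        nlinarith

lemma hasRatioMomentBound_growthFactor (hα : α < 1) (hμ : 0 ≤ μ) (hαη : (1 - α) * η = 1)
    (hWmeas : Measurable (Function.uncurry W)) (hW0 : ∀ᵐ ω ∂P, W 0 ω = 0)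
    (hWgauss : ∀ s t : ℝ, 0 ≤ s → s ≤ t →
      P.map (fun ω => W t ω - W s ω) = ProbabilityTheory.gaussianReal 0 (t - s).toNNReal)
    (hcmeas : Measurable (Function.uncurry c)) (hc : ∀ u ω, 0 ≤ c u ω)
    (hci : ∀ᵐ ω ∂P, ∀ t ≥ (0 : ℝ), IntegrableOn (c · ω) (Ioc 0 t)) :
    HasRatioMomentBound P η (growthFactor α μ σ c W) where
  pos t ω := exp_pos _
  measurable := by
    have hdrift := Measurable.setIntegral_Ioc_uncurry
      (f := fun s ω => (1 - α) * (μ + c s ω + σ ^ 2 / 2))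
      (((hcmeas.const_add μ).add_const _).const_mul _) 0
    exact (hdrift.add (hWmeas.const_mul _)).exp
  ae_eq_one_at_zero := by
    filter_upwards [hW0] with ω hω
    simp [growthFactor, hω]
  lintegral_rpow_div_le_one s t hs hst :=
    lintegral_growthFactor_div_rpow_le_one hα hμ hαη (hWgauss s t hs hst) hc
      (hci.mono fun ω hω => hω t (hs.trans hst)) hs hst

end growthFactor

theorem ramsey_lipschitz_type_estimate_general
    {Ω : Type*} [MeasurableSpace Ω] (P : Measure Ω) [IsProbabilityMeasure P]
    (α μ σ η : ℝ) (hα0 : 0 < α) (hα1 : α < 1) (hμ : 0 < μ)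
    (hη : η = 1 / (1 - α))
    (W : ℝ → Ω → ℝ)
    (hWmeas : Measurable (Function.uncurry W))
    (hW0 : ∀ᵐ ω ∂P, W 0 ω = 0)
    (hWgauss : ∀ s t : ℝ, 0 ≤ s → s ≤ t →
      P.map (fun ω => W t ω - W s ω) =
        ProbabilityTheory.gaussianReal 0 (Real.toNNReal (t - s)))
    (c : ℝ → Ω → ℝ)
    (hcmeas : Measurable (Function.uncurry c))
    (hcnonneg : ∀ t ω, 0 ≤ c t ω)
    (hcint : ∀ᵐ ω ∂P, ∀ t ≥ (0 : ℝ), IntegrableOn (fun s => c s ω) (Ioc 0 t))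
    (G : ℝ → Ω → ℝ)
    (hG : ∀ t ω, G t ω =
      Real.exp ((∫ s in Ioc (0 : ℝ) t, (1 - α) * (μ + c s ω + σ ^ 2 / 2))
        + (1 - α) * σ * W t ω))
    (X : ℝ → ℝ → Ω → ℝ)
    (hX : ∀ x t ω, X x t ω =
      (G t ω) ^ (-η) * (x ^ (1 - α) + (1 - α) * ∫ s in Ioc (0 : ℝ) t, G s ω) ^ η) :
    ∀ ε > (0 : ℝ), ∃ C > (0 : ℝ),
      C = (2 : ℝ) ^ (η ^ 2) * ((η - 1) / ε) ^ (η - 1) ∧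
      ∀ x > (0 : ℝ), ∀ y > (0 : ℝ), ∀ t ≥ (0 : ℝ),
        ∫⁻ ω, ENNReal.ofReal |X x t ω - X y t ω| ∂P
          ≤ ENNReal.ofReal (C * |x - y| + ε * (x + y + t ^ η)) := by
  have hα' : 0 < 1 - α := by linarith
  have hη1 : 1 < η := by rw [hη, lt_div_iff₀ hα', one_mul]; linarith
  have hαη : (1 - α) * η = 1 := by rw [hη]; field_simp
  have hη1' : 0 < η - 1 := by linarith
  obtain rfl : G = growthFactor α μ σ c W := funext fun t => funext (hG t)
  obtain rfl : X = capitalPerCapita (growthFactor α μ σ c W) (1 - α) η :=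
    funext fun x => funext fun t => funext (hX x t)
  have hmoment := hasRatioMomentBound_growthFactor hα1 hμ.le hαη hWmeas hW0 hWgauss hcmeas
    hcnonneg hcint (σ := σ)
  intro ε hε
  refine ⟨_, by positivity, rfl, fun x hx y hy t ht => ?_⟩
  exact hmoment.lintegral_abs_capitalPerCapita_sub_le hη1 hαη hε hx.le hy.le ht

/-- Continuity-in-the-initial-condition estimate: for every `ε > 0` there is a constant
`C_ε = 2^(η²) ((η-1)/ε)^(η-1) > 0`, depending only on `ε` and `η`, such that
`E[|X^x_t - X^y_t|] ≤ C_ε |x-y| + ε (x + y + t^η)`. -/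
theorem ramsey_lipschitz_type_estimate
    {Ω : Type*} [MeasurableSpace Ω] (P : Measure Ω) [IsProbabilityMeasure P]
    (α μ σ η : ℝ) (hα0 : 0 < α) (hα1 : α < 1) (hμ : 0 < μ) (hσ : 0 < σ)
    (hη : η = 1 / (1 - α))
    (W : ℝ → Ω → ℝ)
    (hWmeas : Measurable (Function.uncurry W))
    (hW0 : ∀ᵐ ω ∂P, W 0 ω = 0)
    (hWgauss : ∀ s t : ℝ, 0 ≤ s → s ≤ t →
      P.map (fun ω => W t ω - W s ω) =
        ProbabilityTheory.gaussianReal 0 (Real.toNNReal (t - s)))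
    (c : ℝ → Ω → ℝ)
    (hcmeas : Measurable (Function.uncurry c))
    (hcnonneg : ∀ t ω, 0 ≤ c t ω)
    (hcint : ∀ᵐ ω ∂P, ∀ t ≥ (0 : ℝ), IntegrableOn (fun s => c s ω) (Ioc 0 t))
    (G : ℝ → Ω → ℝ)
    (hG : ∀ t ω, G t ω =
      Real.exp ((∫ s in Ioc (0 : ℝ) t, (1 - α) * (μ + c s ω + σ ^ 2 / 2))
        + (1 - α) * σ * W t ω))
    (X : ℝ → ℝ → Ω → ℝ)
    (hX : ∀ x t ω, X x t ω =
      (G t ω) ^ (-η) * (x ^ (1 - α) + (1 - α) * ∫ s in Ioc (0 : ℝ) t, G s ω) ^ η) :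
    ∀ ε > (0 : ℝ), ∃ C > (0 : ℝ),
      C = (2 : ℝ) ^ (η ^ 2) * ((η - 1) / ε) ^ (η - 1) ∧
      ∀ x > (0 : ℝ), ∀ y > (0 : ℝ), ∀ t ≥ (0 : ℝ),
        ∫⁻ ω, ENNReal.ofReal |X x t ω - X y t ω| ∂P
          ≤ ENNReal.ofReal (C * |x - y| + ε * (x + y + t ^ η)) :=
  ramsey_lipschitz_type_estimate_general P α μ σ η hα0 hα1 hμ hη W hWmeas hW0 hWgauss c hcmeas
    hcnonneg hcint G hG X hX
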